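/- arXiv:2211.11028 — 4 statements merged into one kernel-verified Lean document; each statement's English description precedes it below -/
import Mathlib

section
/- Let l: ℝ → ℝ be a nonnegative quasiconvex function with minimizer x*, let X_a be a real random variable, and for a constant c ∈ ℝ define D(c) = E[l(X_a)] - E[l(min(X_a, c))]. Then D is nondecreasing on (-∞, x*] and nonincreasing on [x*, ∞); in particular D is maximized at c = x*. -/
open MeasureTheory

/-- For a deterministic guardrail `c`, the benefit
`D(c) = E[l(Xa)] - E[l(min(Xa, c))]` is nondecreasing on `(-∞, x*]`,
nonincreasing on `[x*, ∞)`, and maximized at `c = x*`. -/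
theorem benefit_unimodal_in_deterministic_guardrail
    {Ω : Type*} [MeasurableSpace Ω] (μ : Measure Ω) [IsProbabilityMeasure μ]
    (l : ℝ → ℝ) (xs : ℝ)
    (hl_nonneg : ∀ x, 0 ≤ l x)
    (hl_dec : ∀ x y, x ≤ y → y ≤ xs → l y ≤ l x)
    (hl_inc : ∀ x y, xs ≤ x → x ≤ y → l x ≤ l y)
    (Xa : Ω → ℝ)
    (hInt_a : Integrable (fun ω => l (Xa ω)) μ)
    (hInt_min : ∀ c : ℝ, Integrable (fun ω => l (min (Xa ω) c)) μ) :
    MonotoneOn (fun c : ℝ => (∫ ω, l (Xa ω) ∂μ) - ∫ ω, l (min (Xa ω) c) ∂μ) (Set.Iic xs) ∧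
    AntitoneOn (fun c : ℝ => (∫ ω, l (Xa ω) ∂μ) - ∫ ω, l (min (Xa ω) c) ∂μ) (Set.Ici xs) ∧
    (∀ c : ℝ, (∫ ω, l (Xa ω) ∂μ) - ∫ ω, l (min (Xa ω) c) ∂μ
        ≤ (∫ ω, l (Xa ω) ∂μ) - ∫ ω, l (min (Xa ω) xs) ∂μ) := by
  refine ⟨?_, ?_, ?_⟩
  · intro c hc c' hc' hcc'
    simp only [Set.mem_Iic] at hc hc'
    have : (∫ ω, l (min (Xa ω) c') ∂μ) ≤ ∫ ω, l (min (Xa ω) c) ∂μ := by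
      refine integral_mono (hInt_min c') (hInt_min c) (fun ω => ?_)
      exact hl_dec _ _ (min_le_min le_rfl hcc') (le_trans (min_le_right _ _) hc')
    simp only []; linarith
  · intro c hc c' hc' hcc'
    simp only [Set.mem_Ici] at hc hc'
    have : (∫ ω, l (min (Xa ω) c) ∂μ) ≤ ∫ ω, l (min (Xa ω) c') ∂μ := by
      refine integral_mono (hInt_min c) (hInt_min c') (fun ω => ?_)
      rcases le_or_gt (Xa ω) c with h | h
      · rw [min_eq_left h, min_eq_left (h.trans hcc')]
      · rw [min_eq_right h.le]
        exact hl_inc _ _ hc (le_min h.le hcc')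
    simp only []; linarith
  · intro c
    have : (∫ ω, l (min (Xa ω) xs) ∂μ) ≤ ∫ ω, l (min (Xa ω) c) ∂μ := by
      refine integral_mono (hInt_min xs) (hInt_min c) (fun ω => ?_)
      rcases le_or_gt c xs with h | h
      · exact hl_dec _ _ (min_le_min le_rfl h) (min_le_right _ _)
      · rcases le_or_gt (Xa ω) xs with h2 | h2
        · rw [min_eq_left h2, min_eq_left (h2.trans h.le)]
        · rw [min_eq_right h2.le]
          exact hl_inc _ _ le_rfl (le_min h2.le h.le)
    linarith
end

section
/- Let l: ℝ → ℝ be a nonnegative quasiconvex function with minimizer x*. Let X_a, X_hl, X_hu be real random variables with X_hl ≤ x* ≤ X_hu almost surely, and X̂ = min(max(X_a, X_hl), X_hu). Then E[l(X̂)] ≤ E[l(X_a)]. -/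
open MeasureTheory

/-- If the two-sided guardrail encloses the optimal decision,
`Xhl ≤ x* ≤ Xhu` a.s., then safeguarding always (weakly) improves
the algorithmic decision. -/
theorem two_sided_safeguard_beneficial_of_enclosing
    {Ω : Type*} [MeasurableSpace Ω] (μ : Measure Ω) [IsProbabilityMeasure μ]
    (l : ℝ → ℝ) (xs : ℝ)
    (hl_nonneg : ∀ x, 0 ≤ l x)
    (hl_dec : ∀ x y, x ≤ y → y ≤ xs → l y ≤ l x)
    (hl_inc : ∀ x y, xs ≤ x → x ≤ y → l x ≤ l y)
    (Xa Xhl Xhu : Ω → ℝ)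
    (h_enclose : ∀ᵐ ω ∂μ, Xhl ω ≤ xs ∧ xs ≤ Xhu ω)
    (hInt_a : Integrable (fun ω => l (Xa ω)) μ)
    (hInt_cl : Integrable (fun ω => l (min (max (Xa ω) (Xhl ω)) (Xhu ω))) μ) :
    ∫ ω, l (min (max (Xa ω) (Xhl ω)) (Xhu ω)) ∂μ ≤ ∫ ω, l (Xa ω) ∂μ := by
  refine integral_mono_ae hInt_cl hInt_a ?_
  filter_upwards [h_enclose] with ω ⟨h1, h2⟩
  rcases le_or_gt (Xa ω) (Xhl ω) with h | h
  · rw [max_eq_right h, min_eq_left (h1.trans h2)]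
    exact hl_dec _ _ h h1
  · rw [max_eq_left h.le]
    rcases le_or_gt (Xa ω) (Xhu ω) with h' | h'
    · rw [min_eq_left h']
    · rw [min_eq_right h'.le]
      exact hl_inc _ _ h2 h'.le
end

section
/- Consider a duopoly with the focal firm's demand d(p, p') = α - βp + γp' where β > γ > 0. Suppose historical prices (p_t, p_t') are i.i.d. with common mean μ, common variance σ² > 0, and correlation ρ ∈ [0,1], and demand observations d_t = α - βp_t + γp_t' + ε_t with i.i.d. mean-zero noise independent of prices. The OLS price X_a = α̂_n/(2β̂_n) obtained by regressing d_t on (1, -p_t) converges in probability to (α + γμ(1−ρ)) / (2(β − γρ)) as n → ∞. -/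
open MeasureTheory ProbabilityTheory Filter Topology

lemma sum_centered_mul (n : ℕ) (hn : n ≠ 0) (X Y : ℕ → ℝ) :
    ∑ t ∈ Finset.range n,
        (X t - (∑ s ∈ Finset.range n, X s) / n) * (Y t - (∑ s ∈ Finset.range n, Y s) / n)
      = ∑ t ∈ Finset.range n, X t * Y t
          - (∑ t ∈ Finset.range n, X t) * (∑ t ∈ Finset.range n, Y t) / n := by
  have hn' : (n : ℝ) ≠ 0 := Nat.cast_ne_zero.2 hn
  set SX := ∑ s ∈ Finset.range n, X s with hSX
  set SY := ∑ s ∈ Finset.range n, Y s with hSY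
  have h : ∀ t, (X t - SX / n) * (Y t - SY / n)
      = X t * Y t - (SY / n) * X t - (SX / n) * Y t + (SX / n) * (SY / n) := by
    intro t; ring
  rw [Finset.sum_congr rfl fun t _ => h t]
  rw [Finset.sum_add_distrib, Finset.sum_sub_distrib, Finset.sum_sub_distrib,
    ← Finset.mul_sum, ← Finset.mul_sum, Finset.sum_const, Finset.card_range, nsmul_eq_mul,
    ← hSX, ← hSY]
  field_simp
  ring

/-- In a duopoly with true demand `d_t = α - βp_t + γp'_t + ε_t`
(`β > γ > 0`), where the i.i.d. price pairs have mean `m`, variance `σ² > 0`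
and correlation `ρ ∈ [0,1]`, and the noise is mean-zero and independent of the
prices, the OLS price `α̂_n/(2β̂_n)` from fitting the misspecified monopolistic
model `d = α̂ - β̂p` converges in probability to
`(α + γm(1-ρ)) / (2(β - γρ))`. -/
theorem ols_price_limit_under_competition
    {Ω : Type*} [MeasurableSpace Ω] (μ : Measure Ω) [IsProbabilityMeasure μ]
    (α β γ m σ ρ : ℝ) (hγ : 0 < γ) (hβγ : γ < β) (hσ : 0 < σ)
    (hρ0 : 0 ≤ ρ) (hρ1 : ρ ≤ 1)
    (P P' E : ℕ → Ω → ℝ)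
    (hPm : ∀ t, Measurable (P t)) (hP'm : ∀ t, Measurable (P' t))
    (hEm : ∀ t, Measurable (E t))
    -- the triples (p_t, p'_t, ε_t) are i.i.d.
    (hiid : iIndepFun
      (fun t ω => (P t ω, P' t ω, E t ω)) μ)
    (hident : ∀ t, Measure.map (fun ω => (P t ω, P' t ω, E t ω)) μ
      = Measure.map (fun ω => (P 0 ω, P' 0 ω, E 0 ω)) μ)
    -- noise is independent of the contemporaneous prices and mean zero
    (hnoise_indep : ∀ t, IndepFun (fun ω => (P t ω, P' t ω)) (E t) μ)
    (hEmean : ∫ ω, E 0 ω ∂μ = 0)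
    -- moment conditions
    (hIntP : Integrable (P 0) μ) (hIntP' : Integrable (P' 0) μ)
    (hIntP2 : Integrable (fun ω => P 0 ω ^ 2) μ)
    (hIntP'2 : Integrable (fun ω => P' 0 ω ^ 2) μ)
    (hIntPP' : Integrable (fun ω => P 0 ω * P' 0 ω) μ)
    (hIntE2 : Integrable (fun ω => E 0 ω ^ 2) μ)
    (hmeanP : ∫ ω, P 0 ω ∂μ = m) (hmeanP' : ∫ ω, P' 0 ω ∂μ = m)
    (hvarP : ∫ ω, (P 0 ω - m) ^ 2 ∂μ = σ ^ 2)
    (hvarP' : ∫ ω, (P' 0 ω - m) ^ 2 ∂μ = σ ^ 2)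
    (hcov : ∫ ω, (P 0 ω - m) * (P' 0 ω - m) ∂μ = ρ * σ ^ 2)
    -- observed demand
    (D : ℕ → Ω → ℝ)
    (hD : ∀ t ω, D t ω = α - β * P t ω + γ * P' t ω + E t ω)
    -- the OLS price from regressing d_t on (1, -p_t) and maximizing p·(α̂ - β̂p)
    (Xa : ℕ → Ω → ℝ)
    (hXa : ∀ n ω,
      Xa n ω =
        (((∑ t ∈ Finset.range n, D t ω) / n)
            - ((∑ t ∈ Finset.range n,
                  (P t ω - (∑ s ∈ Finset.range n, P s ω) / n)
                    * (D t ω - (∑ s ∈ Finset.range n, D s ω) / n))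
                / (∑ t ∈ Finset.range n,
                    (P t ω - (∑ s ∈ Finset.range n, P s ω) / n) ^ 2))
              * ((∑ t ∈ Finset.range n, P t ω) / n))
          / (2 * (-((∑ t ∈ Finset.range n,
                  (P t ω - (∑ s ∈ Finset.range n, P s ω) / n)
                    * (D t ω - (∑ s ∈ Finset.range n, D s ω) / n))
                / (∑ t ∈ Finset.range n,
                    (P t ω - (∑ s ∈ Finset.range n, P s ω) / n) ^ 2))))) :
    TendstoInMeasure μ Xa atTop
      (fun _ => (α + γ * m * (1 - ρ)) / (2 * (β - γ * ρ))) := by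
  have hbb : 0 < β - γ * ρ := by nlinarith [mul_le_mul_of_nonneg_left hρ1 hγ.le]
  have hσ2 : (σ : ℝ) ^ 2 ≠ 0 := pow_ne_zero 2 hσ.ne'
  -- measurability of D and Xa
  have hDm : ∀ t, Measurable (D t) := by
    intro t
    have h : D t = fun ω => α - β * P t ω + γ * P' t ω + E t ω := funext (hD t)
    rw [h]
    exact ((measurable_const.sub ((hPm t).const_mul β)).add ((hP'm t).const_mul γ)).add (hEm t)
  have hXam : ∀ n, AEStronglyMeasurable (Xa n) μ := by
    intro n
    have h : Xa n = fun ω =>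
        (((∑ t ∈ Finset.range n, D t ω) / n)
            - ((∑ t ∈ Finset.range n,
                  (P t ω - (∑ s ∈ Finset.range n, P s ω) / n)
                    * (D t ω - (∑ s ∈ Finset.range n, D s ω) / n))
                / (∑ t ∈ Finset.range n,
                    (P t ω - (∑ s ∈ Finset.range n, P s ω) / n) ^ 2))
              * ((∑ t ∈ Finset.range n, P t ω) / n))
          / (2 * (-((∑ t ∈ Finset.range n,
                  (P t ω - (∑ s ∈ Finset.range n, P s ω) / n)
                    * (D t ω - (∑ s ∈ Finset.range n, D s ω) / n))
                / (∑ t ∈ Finset.range n,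
                    (P t ω - (∑ s ∈ Finset.range n, P s ω) / n) ^ 2)))) := funext (hXa n)
    rw [h]
    have hSP : Measurable fun ω => ∑ s ∈ Finset.range n, P s ω :=
      Finset.measurable_sum _ fun s _ => hPm s
    have hSD : Measurable fun ω => ∑ s ∈ Finset.range n, D s ω :=
      Finset.measurable_sum _ fun s _ => hDm s
    have hnum : Measurable fun ω => ∑ t ∈ Finset.range n,
        (P t ω - (∑ s ∈ Finset.range n, P s ω) / n)
          * (D t ω - (∑ s ∈ Finset.range n, D s ω) / n) :=
      Finset.measurable_sum _ fun t _ =>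
        ((hPm t).sub (hSP.div_const n)).mul ((hDm t).sub (hSD.div_const n))
    have hden : Measurable fun ω => ∑ t ∈ Finset.range n,
        (P t ω - (∑ s ∈ Finset.range n, P s ω) / n) ^ 2 :=
      Finset.measurable_sum _ fun t _ => ((hPm t).sub (hSP.div_const n)).pow measurable_const
    exact (((hSD.div_const n).sub ((hnum.div hden).mul (hSP.div_const n))).div
      (measurable_const.mul (hnum.div hden).neg)).aestronglyMeasurable
  apply tendstoInMeasure_of_tendsto_ae hXam
  -- LLN machinery
  have hTm : ∀ t, Measurable fun ω => (P t ω, P' t ω, E t ω) :=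
    fun t => (hPm t).prodMk ((hP'm t).prodMk (hEm t))
  have hTid : ∀ t, IdentDistrib (fun ω => (P t ω, P' t ω, E t ω))
      (fun ω => (P 0 ω, P' 0 ω, E 0 ω)) μ μ :=
    fun t => ⟨(hTm t).aemeasurable, (hTm 0).aemeasurable, hident t⟩
  have lln : ∀ f : ℝ × ℝ × ℝ → ℝ, Measurable f →
      Integrable (fun ω => f (P 0 ω, P' 0 ω, E 0 ω)) μ →
      ∀ᵐ ω ∂μ, Tendsto (fun n : ℕ => (∑ t ∈ Finset.range n, f (P t ω, P' t ω, E t ω)) / n)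
        atTop (𝓝 (∫ ω, f (P 0 ω, P' 0 ω, E 0 ω) ∂μ)) := by
    intro f hf hint
    exact strong_law_ae_real (fun t ω => f (P t ω, P' t ω, E t ω)) hint
      (fun i j hij => (hiid.indepFun hij).comp hf hf)
      (fun i => (hTid i).comp hf)
  -- basic integrability and moments
  have hIntE : Integrable (E 0) μ :=
    ((memLp_two_iff_integrable_sq (hEm 0).aestronglyMeasurable).2 hIntE2).integrable
      (by norm_num)
  have hPEindep : IndepFun (P 0) (E 0) μ :=
    (hnoise_indep 0).comp measurable_fst measurable_id
  have hIntPE : Integrable (fun ω => P 0 ω * E 0 ω) μ := by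
    have := hPEindep.integrable_mul hIntP hIntE
    exact this
  have hPEzero : ∫ ω, P 0 ω * E 0 ω ∂μ = 0 := by
    have := hPEindep.integral_mul_eq_mul_integral hIntP.aestronglyMeasurable hIntE.aestronglyMeasurable
    calc ∫ ω, P 0 ω * E 0 ω ∂μ = ∫ ω, (P 0 * E 0) ω ∂μ := rfl
      _ = (∫ ω, P 0 ω ∂μ) * ∫ ω, E 0 ω ∂μ := this
      _ = 0 := by rw [hEmean, mul_zero]
  have hP2 : ∫ ω, P 0 ω ^ 2 ∂μ = σ ^ 2 + m ^ 2 := by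
    have h1 : Integrable (fun ω => 2 * m * P 0 ω) μ := hIntP.const_mul _
    have h2 : ∫ ω, (P 0 ω - m) ^ 2 ∂μ = (∫ ω, P 0 ω ^ 2 ∂μ) - 2 * m * m + m ^ 2 := by
      have h : (fun ω => (P 0 ω - m) ^ 2)
          = fun ω => P 0 ω ^ 2 - 2 * m * P 0 ω + m ^ 2 := by ext ω; ring
      have i1 : Integrable (fun ω => P 0 ω ^ 2 - 2 * m * P 0 ω) μ := hIntP2.sub h1
      rw [h, integral_add i1 (integrable_const _), integral_sub hIntP2 h1,
        integral_const_mul _ _, hmeanP, integral_const]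
      simp
    rw [hvarP] at h2; nlinarith [h2]
  have hPP' : ∫ ω, P 0 ω * P' 0 ω ∂μ = ρ * σ ^ 2 + m ^ 2 := by
    have h1 : Integrable (fun ω => m * P 0 ω) μ := hIntP.const_mul _
    have h1' : Integrable (fun ω => m * P' 0 ω) μ := hIntP'.const_mul _
    have h2 : ∫ ω, (P 0 ω - m) * (P' 0 ω - m) ∂μ
        = (∫ ω, P 0 ω * P' 0 ω ∂μ) - m * m - m * m + m ^ 2 := by
      have h : (fun ω => (P 0 ω - m) * (P' 0 ω - m))
          = fun ω => P 0 ω * P' 0 ω - m * P' 0 ω - m * P 0 ω + m ^ 2 := by ext ω; ring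
      have i1 : Integrable (fun ω => P 0 ω * P' 0 ω - m * P' 0 ω) μ := hIntPP'.sub h1'
      have i2 : Integrable (fun ω => P 0 ω * P' 0 ω - m * P' 0 ω - m * P 0 ω) μ := i1.sub h1
      rw [h, integral_add i2 (integrable_const _),
        integral_sub i1 h1, integral_sub hIntPP' h1',
        integral_const_mul _ _, integral_const_mul _ _, hmeanP, hmeanP', integral_const]
      simp
    rw [hcov] at h2; nlinarith [h2]
  -- demand moments
  have hIntD : Integrable (fun ω => α - β * P 0 ω + γ * P' 0 ω + E 0 ω) μ :=
    (((integrable_const α).sub (hIntP.const_mul β)).add (hIntP'.const_mul γ)).add hIntE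
  have hmeanD : ∫ ω, (α - β * P 0 ω + γ * P' 0 ω + E 0 ω) ∂μ = α + (γ - β) * m := by
    have i1 : Integrable (fun ω => α - β * P 0 ω) μ :=
      (integrable_const α).sub (hIntP.const_mul β)
    have i2 : Integrable (fun ω => α - β * P 0 ω + γ * P' 0 ω) μ :=
      i1.add (hIntP'.const_mul γ)
    rw [integral_add i2 hIntE,
      integral_add i1 (hIntP'.const_mul γ),
      integral_sub (integrable_const α) (hIntP.const_mul β),
      integral_const_mul _ _, integral_const_mul _ _, hmeanP, hmeanP', hEmean, integral_const]
    simp; ring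
  have hPDfun : (fun ω => P 0 ω * (α - β * P 0 ω + γ * P' 0 ω + E 0 ω))
      = fun ω => α * P 0 ω - β * P 0 ω ^ 2 + γ * (P 0 ω * P' 0 ω) + P 0 ω * E 0 ω := by
    ext ω; ring
  have hIntPD : Integrable (fun ω => P 0 ω * (α - β * P 0 ω + γ * P' 0 ω + E 0 ω)) μ := by
    rw [hPDfun]
    exact (((hIntP.const_mul α).sub (hIntP2.const_mul β)).add (hIntPP'.const_mul γ)).add hIntPE
  have hmeanPD : ∫ ω, P 0 ω * (α - β * P 0 ω + γ * P' 0 ω + E 0 ω) ∂μ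
      = α * m - β * (σ ^ 2 + m ^ 2) + γ * (ρ * σ ^ 2 + m ^ 2) := by
    have i1 : Integrable (fun ω => α * P 0 ω - β * P 0 ω ^ 2) μ :=
      (hIntP.const_mul α).sub (hIntP2.const_mul β)
    have i2 : Integrable (fun ω => α * P 0 ω - β * P 0 ω ^ 2 + γ * (P 0 ω * P' 0 ω)) μ :=
      i1.add (hIntPP'.const_mul γ)
    rw [hPDfun,
      integral_add i2 hIntPE,
      integral_add i1 (hIntPP'.const_mul γ),
      integral_sub (hIntP.const_mul α) (hIntP2.const_mul β),
      integral_const_mul _ _, integral_const_mul _ _, integral_const_mul _ _,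
      hmeanP, hP2, hPP', hPEzero, add_zero]
  -- the four LLN statements
  have L1 : ∀ᵐ ω ∂μ, Tendsto (fun n : ℕ => (∑ t ∈ Finset.range n, P t ω) / n)
      atTop (𝓝 m) := by
    have h := lln (fun x => x.1) measurable_fst hIntP
    simpa [hmeanP] using h
  have L2 : ∀ᵐ ω ∂μ, Tendsto (fun n : ℕ => (∑ t ∈ Finset.range n, P t ω ^ 2) / n)
      atTop (𝓝 (σ ^ 2 + m ^ 2)) := by
    have h := lln (fun x => x.1 ^ 2) (measurable_fst.pow measurable_const) hIntP2
    simpa [hP2] using h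
  have L3 : ∀ᵐ ω ∂μ, Tendsto (fun n : ℕ => (∑ t ∈ Finset.range n, D t ω) / n)
      atTop (𝓝 (α + (γ - β) * m)) := by
    have h := lln (fun x => α - β * x.1 + γ * x.2.1 + x.2.2)
      (((measurable_const.sub (measurable_fst.const_mul β)).add
        ((measurable_fst.comp measurable_snd).const_mul γ)).add
        (measurable_snd.comp measurable_snd)) hIntD
    rw [hmeanD] at h
    refine h.mono fun ω hω => hω.congr fun n => ?_
    congr 1
    exact Finset.sum_congr rfl fun t _ => (hD t ω).symm
  have L4 : ∀ᵐ ω ∂μ, Tendsto (fun n : ℕ => (∑ t ∈ Finset.range n, P t ω * D t ω) / n)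
      atTop (𝓝 (α * m - β * (σ ^ 2 + m ^ 2) + γ * (ρ * σ ^ 2 + m ^ 2))) := by
    have h := lln (fun x => x.1 * (α - β * x.1 + γ * x.2.1 + x.2.2))
      (measurable_fst.mul (((measurable_const.sub (measurable_fst.const_mul β)).add
        ((measurable_fst.comp measurable_snd).const_mul γ)).add
        (measurable_snd.comp measurable_snd))) hIntPD
    rw [hmeanPD] at h
    refine h.mono fun ω hω => hω.congr fun n => ?_
    congr 1
    exact Finset.sum_congr rfl fun t _ => by rw [hD t ω]
  -- pointwise convergence
  filter_upwards [L1, L2, L3, L4] with ω h1 h2 h3 h4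
  set A : ℕ → ℝ := fun n => (∑ t ∈ Finset.range n, P t ω) / n with hA
  set Q : ℕ → ℝ := fun n => (∑ t ∈ Finset.range n, P t ω ^ 2) / n with hQ
  set Dn : ℕ → ℝ := fun n => (∑ t ∈ Finset.range n, D t ω) / n with hDn
  set C : ℕ → ℝ := fun n => (∑ t ∈ Finset.range n, P t ω * D t ω) / n with hC
  set B : ℕ → ℝ := fun n => (C n - A n * Dn n) / (Q n - A n ^ 2) with hBdef
  have hB : Tendsto B atTop (𝓝 (-(β - γ * ρ))) := by
    have hnum : Tendsto (fun n => C n - A n * Dn n) atTop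
        (𝓝 ((α * m - β * (σ ^ 2 + m ^ 2) + γ * (ρ * σ ^ 2 + m ^ 2))
          - m * (α + (γ - β) * m))) := h4.sub (h1.mul h3)
    have hden : Tendsto (fun n => Q n - A n ^ 2) atTop (𝓝 ((σ ^ 2 + m ^ 2) - m ^ 2)) :=
      h2.sub (h1.pow 2)
    have hd0 : (σ ^ 2 + m ^ 2) - m ^ 2 ≠ 0 := by
      intro h; apply hσ2; linarith
    have hval : ((α * m - β * (σ ^ 2 + m ^ 2) + γ * (ρ * σ ^ 2 + m ^ 2))
        - m * (α + (γ - β) * m)) / ((σ ^ 2 + m ^ 2) - m ^ 2) = -(β - γ * ρ) := by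
      have h : (σ ^ 2 + m ^ 2) - m ^ 2 = σ ^ 2 := by ring
      rw [h]
      field_simp
      ring
    rw [← hval]
    exact hnum.div hden hd0
  have hnum2 : Tendsto (fun n => Dn n - B n * A n) atTop
      (𝓝 (α + (γ - β) * m + (β - γ * ρ) * m)) := by
    have h := h3.sub (hB.mul h1)
    have hval : α + (γ - β) * m - -(β - γ * ρ) * m = α + (γ - β) * m + (β - γ * ρ) * m := by
      ring
    rwa [hval] at h
  have hden2 : Tendsto (fun n => 2 * (-(B n))) atTop (𝓝 (2 * (β - γ * ρ))) := by
    have h := hB.neg.const_mul (2 : ℝ)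
    simpa using h
  have hfin := hnum2.div hden2 (by positivity)
  have hLval : (α + (γ - β) * m + (β - γ * ρ) * m) / (2 * (β - γ * ρ))
      = (α + γ * m * (1 - ρ)) / (2 * (β - γ * ρ)) := by
    congr 1; ring
  rw [hLval] at hfin
  -- eventual equality with Xa
  refine hfin.congr' ?_
  filter_upwards [eventually_ge_atTop 1] with n hn
  have hn0 : n ≠ 0 := by omega
  have hnn : (n : ℝ) ≠ 0 := Nat.cast_ne_zero.2 hn0
  have hq : ∀ x y : ℝ, (x / n) / (y / n) = x / y := by
    intro x y
    rcases eq_or_ne y 0 with h | h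
    · simp [h]
    · field_simp
  have hnum_eq : ∑ t ∈ Finset.range n,
      (P t ω - (∑ s ∈ Finset.range n, P s ω) / n)
        * (D t ω - (∑ s ∈ Finset.range n, D s ω) / n)
      = ∑ t ∈ Finset.range n, P t ω * D t ω
          - (∑ t ∈ Finset.range n, P t ω) * (∑ t ∈ Finset.range n, D t ω) / n :=
    sum_centered_mul n hn0 (fun t => P t ω) (fun t => D t ω)
  have hden_eq : ∑ t ∈ Finset.range n,
      (P t ω - (∑ s ∈ Finset.range n, P s ω) / n) ^ 2
      = ∑ t ∈ Finset.range n, P t ω ^ 2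
          - (∑ t ∈ Finset.range n, P t ω) * (∑ t ∈ Finset.range n, P t ω) / n := by
    have := sum_centered_mul n hn0 (fun t => P t ω) (fun t => P t ω)
    calc ∑ t ∈ Finset.range n, (P t ω - (∑ s ∈ Finset.range n, P s ω) / n) ^ 2
        = ∑ t ∈ Finset.range n,
            (P t ω - (∑ s ∈ Finset.range n, P s ω) / n)
              * (P t ω - (∑ s ∈ Finset.range n, P s ω) / n) :=
          Finset.sum_congr rfl fun t _ => sq (P t ω - (∑ s ∈ Finset.range n, P s ω) / n) ▸ by
            ring
      _ = ∑ t ∈ Finset.range n, P t ω * P t ω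
            - (∑ t ∈ Finset.range n, P t ω) * (∑ t ∈ Finset.range n, P t ω) / n := this
      _ = _ := by
          congr 1
          exact Finset.sum_congr rfl fun t _ => (sq (P t ω)).symm
  have hBn : B n = (∑ t ∈ Finset.range n,
        (P t ω - (∑ s ∈ Finset.range n, P s ω) / n)
          * (D t ω - (∑ s ∈ Finset.range n, D s ω) / n))
      / (∑ t ∈ Finset.range n,
          (P t ω - (∑ s ∈ Finset.range n, P s ω) / n) ^ 2) := by
    rw [hnum_eq, hden_eq, hBdef]
    simp only [hA, hQ, hDn, hC]
    rw [← hq (∑ t ∈ Finset.range n, P t ω * D t ω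
        - (∑ t ∈ Finset.range n, P t ω) * (∑ t ∈ Finset.range n, D t ω) / n)
      (∑ t ∈ Finset.range n, P t ω ^ 2
        - (∑ t ∈ Finset.range n, P t ω) * (∑ t ∈ Finset.range n, P t ω) / n)]
    congr 1
    · field_simp
    · field_simp
  rw [hXa n ω, ← hBn]
  rfl
end

section
/- Let B be a real random variable with P(B ≥ b) ≥ p and P(B ≤ −b) ≥ p for some b > 0 and p ∈ (0, 0.5). Let u ∈ ℝ satisfy 0 ≤ u ≤ √(p/(1−p))·b. Then E[(B² − u²)·1{u ≤ B}] ≥ p·b² − (1−p)·u² ≥ 0. -/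
open MeasureTheory

/-- If `P(B ≥ b) ≥ p`, `P(B ≤ -b) ≥ p` with `b > 0`,
`p ∈ (0, 1/2)`, and `0 ≤ u ≤ √(p/(1-p))·b`, then
`E[(B² - u²)·1{u ≤ B}] ≥ p·b² - (1-p)·u² ≥ 0`. -/
theorem cap_slack_inequality_contaminated_covariates
    {Ω : Type*} [MeasurableSpace Ω] (μ : Measure Ω) [IsProbabilityMeasure μ]
    (B : Ω → ℝ) (hB : Measurable B)
    (b p u : ℝ) (hb : 0 < b) (hp0 : 0 < p) (hp : p < 0.5)
    (hPub : p ≤ (μ {ω | b ≤ B ω}).toReal)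
    (hPlb : p ≤ (μ {ω | B ω ≤ -b}).toReal)
    (hu0 : 0 ≤ u) (hu : u ≤ Real.sqrt (p / (1 - p)) * b)
    (hInt : Integrable (fun ω => if u ≤ B ω then B ω ^ 2 - u ^ 2 else 0) μ) :
    p * b ^ 2 - (1 - p) * u ^ 2
        ≤ ∫ ω, (if u ≤ B ω then B ω ^ 2 - u ^ 2 else 0) ∂μ ∧
    0 ≤ p * b ^ 2 - (1 - p) * u ^ 2 := by
  have hp1 : p < 1 := by linarith [hp]
  have h1p : (0:ℝ) < 1 - p := by linarith
  -- u² ≤ p/(1-p) * b²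
  have hsq : u ^ 2 ≤ p / (1 - p) * b ^ 2 := by
    have h := mul_self_le_mul_self hu0 hu
    have hs : Real.sqrt (p / (1 - p)) * Real.sqrt (p / (1 - p)) = p / (1 - p) :=
      Real.mul_self_sqrt (by positivity)
    nlinarith [hs, h]
  have hnn : 0 ≤ p * b ^ 2 - (1 - p) * u ^ 2 := by
    have := mul_le_mul_of_nonneg_left hsq (le_of_lt h1p)
    have : (1 - p) * u ^ 2 ≤ p * b ^ 2 := by
      calc (1 - p) * u ^ 2 ≤ (1 - p) * (p / (1 - p) * b ^ 2) := this
        _ = p * b ^ 2 := by field_simp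
    linarith
  -- u < b
  have hub : u < b := by
    have hlt : p / (1 - p) < 1 := (div_lt_one h1p).mpr (by linarith)
    have : Real.sqrt (p / (1 - p)) < 1 := by
      have h := Real.sqrt_lt_sqrt (by positivity : (0:ℝ) ≤ p / (1 - p)) hlt
      simpa using h
    calc u ≤ Real.sqrt (p / (1 - p)) * b := hu
      _ < 1 * b := by nlinarith
      _ = b := one_mul b
  -- measurable sets
  have hS1 : MeasurableSet {ω | b ≤ B ω} := measurableSet_le measurable_const hB
  have hS2 : MeasurableSet {ω | -b < B ω} := measurableSet_lt measurable_const hB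
  set g : Ω → ℝ := fun ω => (if b ≤ B ω then b ^ 2 else 0) - (if -b < B ω then u ^ 2 else 0)
    with hg
  have hgInt : Integrable g μ := by
    apply Integrable.sub
    · have : (fun ω => if b ≤ B ω then b ^ 2 else 0)
          = Set.indicator {ω | b ≤ B ω} (fun _ => b ^ 2) := by
        ext ω; simp [Set.indicator_apply, Set.mem_setOf_eq]
      rw [this]
      exact (integrable_const _).indicator hS1
    · have : (fun ω => if -b < B ω then u ^ 2 else 0)
          = Set.indicator {ω | -b < B ω} (fun _ => u ^ 2) := by
        ext ω; simp [Set.indicator_apply, Set.mem_setOf_eq]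
      rw [this]
      exact (integrable_const _).indicator hS2
  have hle : ∀ ω, g ω ≤ (if u ≤ B ω then B ω ^ 2 - u ^ 2 else 0) := by
    intro ω
    by_cases h1 : b ≤ B ω
    · have huB : u ≤ B ω := le_trans (le_of_lt hub) h1
      have h2 : -b < B ω := by linarith
      simp only [hg, if_pos h1, if_pos h2, if_pos huB]
      nlinarith
    · by_cases h2 : -b < B ω
      · simp only [hg, if_neg h1, if_pos h2, zero_sub]
        by_cases h3 : u ≤ B ω
        · simp only [if_pos h3]; nlinarith
        · simp only [if_neg h3]; nlinarith
      · have h3 : ¬ u ≤ B ω := by push_neg at h2 ⊢; linarith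
        simp only [hg, if_neg h1, if_neg h2, if_neg h3]; simp
  -- compute ∫ g
  have hind1 : ∫ ω, (if b ≤ B ω then b ^ 2 else 0) ∂μ = (μ {ω | b ≤ B ω}).toReal * b ^ 2 := by
    have : (fun ω => if b ≤ B ω then b ^ 2 else 0)
        = Set.indicator {ω | b ≤ B ω} (fun _ => b ^ 2) := by
      ext ω; simp [Set.indicator_apply, Set.mem_setOf_eq]
    rw [this, integral_indicator_const _ hS1]; simp [mul_comm, measureReal_def]
  have hind2 : ∫ ω, (if -b < B ω then u ^ 2 else 0) ∂μ = (μ {ω | -b < B ω}).toReal * u ^ 2 := by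
    have : (fun ω => if -b < B ω then u ^ 2 else 0)
        = Set.indicator {ω | -b < B ω} (fun _ => u ^ 2) := by
      ext ω; simp [Set.indicator_apply, Set.mem_setOf_eq]
    rw [this, integral_indicator_const _ hS2]; simp [mul_comm, measureReal_def]
  have hcompl : {ω | -b < B ω} = {ω | B ω ≤ -b}ᶜ := by
    ext ω; simp [Set.mem_setOf_eq, not_le]
  have hS2' : (μ {ω | -b < B ω}).toReal ≤ 1 - p := by
    rw [hcompl, prob_compl_eq_one_sub (measurableSet_le hB measurable_const)]
    have hle1 : μ {ω | B ω ≤ -b} ≤ 1 := prob_le_one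
    rw [ENNReal.toReal_sub_of_le hle1 (by simp)]
    simp only [ENNReal.toReal_one]
    linarith
  have hgint : ∫ ω, g ω ∂μ
      = (μ {ω | b ≤ B ω}).toReal * b ^ 2 - (μ {ω | -b < B ω}).toReal * u ^ 2 := by
    rw [hg]
    rw [integral_sub]
    · rw [hind1, hind2]
    · have : (fun ω => if b ≤ B ω then b ^ 2 else 0)
          = Set.indicator {ω | b ≤ B ω} (fun _ => b ^ 2) := by
        ext ω; simp [Set.indicator_apply, Set.mem_setOf_eq]
      rw [this]; exact (integrable_const _).indicator hS1
    · have : (fun ω => if -b < B ω then u ^ 2 else 0)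
          = Set.indicator {ω | -b < B ω} (fun _ => u ^ 2) := by
        ext ω; simp [Set.indicator_apply, Set.mem_setOf_eq]
      rw [this]; exact (integrable_const _).indicator hS2
  have hmono : ∫ ω, g ω ∂μ ≤ ∫ ω, (if u ≤ B ω then B ω ^ 2 - u ^ 2 else 0) ∂μ :=
    integral_mono hgInt hInt hle
  refine ⟨?_, hnn⟩
  have hgeb : p * b ^ 2 - (1 - p) * u ^ 2 ≤ ∫ ω, g ω ∂μ := by
    rw [hgint]
    have h1 : p * b ^ 2 ≤ (μ {ω | b ≤ B ω}).toReal * b ^ 2 :=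
      mul_le_mul_of_nonneg_right hPub (by positivity)
    have h2 : (μ {ω | -b < B ω}).toReal * u ^ 2 ≤ (1 - p) * u ^ 2 :=
      mul_le_mul_of_nonneg_right hS2' (by positivity)
    linarith
  linarith
end
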